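/- arXiv:1904.02564 — 4 statements merged into one kernel-verified Lean document; each statement's English description precedes it below -/
import Mathlib

section
/- Nominal Tarski fixpoint theorem: if X is a nominal set and f is a finitely supported, subset-inclusion-monotonic function from the finitely supported subsets of X to themselves, then f has a least fixpoint, and it equals the intersection of all finitely supported sets S with f(S) ⊆ S. -/
open scoped Classical

universe u v

abbrev Atom : Type := ℕ

/-- A permutation of atoms is finitary if it moves only finitely many atoms. -/
def IsFinPerm (π : Equiv.Perm Atom) : Prop := {a : Atom | π a ≠ a}.Finite

/-- `N` supports `x` with respect to the permutation action `act`. -/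
def SupportsAct {X : Type*} (act : Equiv.Perm Atom → X → X) (N : Set Atom) (x : X) : Prop :=
  ∀ π : Equiv.Perm Atom, IsFinPerm π → (∀ a ∈ N, π a = a) → act π x = x

/-- The support of `x`: the intersection of all finite supporting sets. -/
def suppAct {X : Type*} (act : Equiv.Perm Atom → X → X) (x : X) : Set Atom :=
  ⋂₀ {N : Set Atom | N.Finite ∧ SupportsAct act N x}

/-- `x` is finitely supported. -/
def FinSuppAct {X : Type*} (act : Equiv.Perm Atom → X → X) (x : X) : Prop :=
  ∃ N : Set Atom, N.Finite ∧ SupportsAct act N x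

/-- The pointwise action on subsets. -/
def setAct {X : Type*} (act : Equiv.Perm Atom → X → X) (π : Equiv.Perm Atom) (s : Set X) :
    Set X :=
  act π '' s

/-- A nominal set: a permutation action where every element is finitely supported. -/
structure Nominal (X : Type*) where
  act : Equiv.Perm Atom → X → X
  act_one : ∀ x, act 1 x = x
  act_mul : ∀ π π' x, act (π * π') x = act π (act π' x)
  finSupp : ∀ x, FinSuppAct act x

/-- A nominal transition system. -/
structure NTS (States Pred Act : Type*) where
  nomS : Nominal States
  nomP : Nominal Pred
  nomA : Nominal Act
  sat : States → Pred → Prop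
  sat_eqv : ∀ π, IsFinPerm π → ∀ P φ, sat P φ → sat (nomS.act π P) (nomP.act π φ)
  bn : Act → Finset Atom
  bn_eqv : ∀ π, IsFinPerm π → ∀ α, (bn (nomA.act π α) : Set Atom) = π '' (bn α : Set Atom)
  bn_supp : ∀ α, (bn α : Set Atom) ⊆ suppAct nomA.act α
  tr : States → Act → States → Prop
  tr_eqv : ∀ π, IsFinPerm π → ∀ P α P', tr P α P' →
    tr (nomS.act π P) (nomA.act π α) (nomS.act π P')
  tr_alpha : ∀ (a b : Atom) (P : States) (α : Act) (P' : States), a ∈ bn α →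
    b ∉ suppAct nomA.act α → b ∉ suppAct nomS.act P' → tr P α P' →
    tr P (nomA.act (Equiv.swap a b) α) (nomS.act (Equiv.swap a b) P')

variable {S Pr Ac : Type*}

/-- A (strong) bisimulation: symmetric, statically implicating, and simulating. -/
def NTS.IsBisim (T : NTS S Pr Ac) (R : S → S → Prop) : Prop :=
  (∀ P Q, R P Q → R Q P) ∧
  ∀ P Q, R P Q →
    (∀ φ, T.sat P φ → T.sat Q φ) ∧
    (∀ α P', (∀ a ∈ T.bn α, a ∉ suppAct T.nomS.act Q) → T.tr P α P' →
      ∃ Q', T.tr Q α Q' ∧ R P' Q')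

/-- Bisimilarity. -/
def NTS.Bisim (T : NTS S Pr Ac) (P Q : S) : Prop := ∃ R, T.IsBisim R ∧ R P Q

lemma finperm_inv {π : Equiv.Perm Atom} (h : IsFinPerm π) : IsFinPerm π⁻¹ := by
  have : {a : Atom | π⁻¹ a ≠ a} = {a | π a ≠ a} := by
    ext a
    simp only [Set.mem_setOf_eq, ne_eq, Equiv.Perm.inv_eq_iff_eq]
    exact ⟨fun h' h'' => h' h''.symm, fun h' h'' => h' h''.symm⟩
  rw [IsFinPerm, this]; exact h

lemma finperm_mul {π σ : Equiv.Perm Atom} (hπ : IsFinPerm π) (hσ : IsFinPerm σ) :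
    IsFinPerm (π * σ) := by
  apply (hπ.union hσ).subset
  intro a ha
  simp only [Set.mem_setOf_eq, Equiv.Perm.mul_apply] at ha
  by_contra h
  simp only [Set.mem_union, Set.mem_setOf_eq, not_or, not_not] at h
  exact ha (by rw [h.2, h.1])

lemma setAct_mul {X : Type} (NX : Nominal X) (π π' : Equiv.Perm Atom) (s : Set X) :
    setAct NX.act (π * π') s = setAct NX.act π (setAct NX.act π' s) := by
  simp only [setAct, ← Set.image_comp]
  exact Set.image_congr' (fun x => NX.act_mul π π' x)

lemma setAct_one {X : Type} (NX : Nominal X) (s : Set X) : setAct NX.act 1 s = s := by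
  simp only [setAct]
  have : NX.act 1 = id := funext NX.act_one
  rw [this, Set.image_id]

lemma finsupp_setAct {X : Type} (NX : Nominal X) {s : Set X}
    (hs : FinSuppAct (setAct NX.act) s) (π : Equiv.Perm Atom) (hπ : IsFinPerm π) :
    FinSuppAct (setAct NX.act) (setAct NX.act π s) := by
  obtain ⟨M, hMfin, hM⟩ := hs
  refine ⟨π '' M, hMfin.image _, ?_⟩
  intro σ hσ hfix
  have hτ : IsFinPerm (π⁻¹ * σ * π) := finperm_mul (finperm_mul (finperm_inv hπ) hσ) hπ
  have hfix' : ∀ a ∈ M, (π⁻¹ * σ * π) a = a := by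
    intro a ha
    simp only [Equiv.Perm.mul_apply]
    rw [hfix (π a) ⟨a, ha, rfl⟩, Equiv.Perm.inv_eq_iff_eq]
  have key := hM _ hτ hfix'
  calc setAct NX.act σ (setAct NX.act π s)
      = setAct NX.act (σ * π) s := (setAct_mul NX σ π s).symm
    _ = setAct NX.act (π * (π⁻¹ * σ * π)) s := by group
    _ = setAct NX.act π (setAct NX.act (π⁻¹ * σ * π) s) := setAct_mul NX _ _ s
    _ = setAct NX.act π s := by rw [key]

/-- Nominal Tarski fixpoint theorem: a finitely supported, monotonic function on the
finitely supported subsets of a nominal set has a least fixpoint, namely the intersection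
of all finitely supported pre-fixpoints. -/
theorem nominal_tarski {X : Type} (NX : Nominal X) (f : Set X → Set X)
    (hmap : ∀ s, FinSuppAct (setAct NX.act) s → FinSuppAct (setAct NX.act) (f s))
    (hmono : ∀ s t, FinSuppAct (setAct NX.act) s → FinSuppAct (setAct NX.act) t →
      s ⊆ t → f s ⊆ f t)
    (hsupp : ∃ N : Set Atom, N.Finite ∧ ∀ π : Equiv.Perm Atom, IsFinPerm π →
      (∀ a ∈ N, π a = a) → ∀ s, setAct NX.act π (f s) = f (setAct NX.act π s)) :
    ∃ L : Set X,
      L = ⋂₀ {s : Set X | FinSuppAct (setAct NX.act) s ∧ f s ⊆ s} ∧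
      FinSuppAct (setAct NX.act) L ∧
      f L = L ∧
      (∀ s, FinSuppAct (setAct NX.act) s → f s ⊆ s → L ⊆ s) := by

  set Fam : Set (Set X) := {s : Set X | FinSuppAct (setAct NX.act) s ∧ f s ⊆ s} with hFam
  set L : Set X := ⋂₀ Fam with hL
  obtain ⟨N, hNfin, hN⟩ := hsupp
  -- closure of Fam under the action of permutations fixing N
  have hclose : ∀ π : Equiv.Perm Atom, IsFinPerm π → (∀ a ∈ N, π a = a) →
      ∀ s ∈ Fam, setAct NX.act π s ∈ Fam := by
    intro π hπ hfix s hs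
    refine ⟨finsupp_setAct NX hs.1 π hπ, ?_⟩
    rw [← hN π hπ hfix s]
    exact Set.image_mono hs.2
  -- L is supported by N
  have hLsub : ∀ π : Equiv.Perm Atom, IsFinPerm π → (∀ a ∈ N, π a = a) →
      setAct NX.act π L ⊆ L := by
    intro π hπ hfix x hx
    obtain ⟨y, hy, rfl⟩ := hx
    intro s hs
    have hinv : ∀ a ∈ N, π⁻¹ a = a := fun a ha => by
      rw [Equiv.Perm.inv_eq_iff_eq, hfix a ha]
    have hs' : setAct NX.act π⁻¹ s ∈ Fam := hclose π⁻¹ (finperm_inv hπ) hinv s hs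
    have hy' : NX.act π y ∈ setAct NX.act π (setAct NX.act π⁻¹ s) :=
      ⟨y, hy _ hs', rfl⟩
    rwa [← setAct_mul, mul_inv_cancel, setAct_one] at hy'
  have hLfs : FinSuppAct (setAct NX.act) L := by
    refine ⟨N, hNfin, ?_⟩
    intro π hπ hfix
    apply Set.Subset.antisymm (hLsub π hπ hfix)
    have hinv : ∀ a ∈ N, π⁻¹ a = a := fun a ha => by
      rw [Equiv.Perm.inv_eq_iff_eq, hfix a ha]
    have h2 := Set.image_mono (f := NX.act π) (hLsub π⁻¹ (finperm_inv hπ) hinv)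
    have : setAct NX.act π (setAct NX.act π⁻¹ L) = L := by
      rw [← setAct_mul, mul_inv_cancel, setAct_one]
    calc L = setAct NX.act π (setAct NX.act π⁻¹ L) := this.symm
      _ ⊆ setAct NX.act π L := h2
  have hleast : ∀ s, FinSuppAct (setAct NX.act) s → f s ⊆ s → L ⊆ s := by
    intro s hsfs hsf
    exact Set.sInter_subset_of_mem ⟨hsfs, hsf⟩
  have hfL_sub : f L ⊆ L := by
    intro x hx s hs
    exact hs.2 (hmono L s hLfs hs.1 (Set.sInter_subset_of_mem hs) hx)
  have hfLfs : FinSuppAct (setAct NX.act) (f L) := hmap L hLfs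
  have hfix : f L = L := by
    apply Set.Subset.antisymm hfL_sub
    have : f L ∈ Fam := ⟨hfLfs, hmono (f L) L hfLfs hLfs hfL_sub⟩
    exact Set.sInter_subset_of_mem this
  exact ⟨L, rfl, hLfs, hfix, hleast⟩
end

section
/- Nominal transfinite iteration fixpoint theorem: let X be a nominal set and f a finitely supported monotonic function on the finitely supported subsets of X. Define f⁰ = ∅, f^{α+1} = f(f^α), and f^λ = ⋃_{α<λ} f^α for limit λ. Then each f^α has support contained in supp(f), the sequence is increasing, and for any cardinal ν > |X| there is an ordinal γ < ν with f^γ = lfp f. -/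
open scoped Classical

universe u v

variable {S Pr Ac : Type*}

/-- Transfinite iteration of a set function: `f⁰ = ∅`, `f^(α+1) = f (f^α)`, and unions at
limit ordinals. -/
noncomputable def iterF {X : Type} (f : Set X → Set X) : Ordinal.{0} → Set X := fun o =>
  Ordinal.limitRecOn o ∅ (fun _ ih => f ih)
    (fun o _ ih => ⋃ (a : Ordinal) (h : a < o), ih a h)

/-- Nominal transfinite iteration fixpoint theorem: every iterate `f^α` is supported by
any finite support `N` of `f`, the iterates are increasing, and for every cardinal
`ν > |X|` the least fixpoint of `f` is reached at some ordinal `γ < ν`. -/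
theorem nominal_iteration_fixpoint {X : Type} (NX : Nominal X) (f : Set X → Set X)
    (hmap : ∀ s, FinSuppAct (setAct NX.act) s → FinSuppAct (setAct NX.act) (f s))
    (hmono : ∀ s t, FinSuppAct (setAct NX.act) s → FinSuppAct (setAct NX.act) t →
      s ⊆ t → f s ⊆ f t)
    (N : Set Atom) (hN : N.Finite)
    (hsupp : ∀ π : Equiv.Perm Atom, IsFinPerm π → (∀ a ∈ N, π a = a) →
      ∀ s, setAct NX.act π (f s) = f (setAct NX.act π s)) :
    (∀ α : Ordinal, SupportsAct (setAct NX.act) N (iterF f α)) ∧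
    (∀ α β : Ordinal, α ≤ β → iterF f α ⊆ iterF f β) ∧
    (∀ ν : Cardinal.{0}, Cardinal.mk X < ν → ∃ γ : Ordinal, γ < ν.ord ∧
      f (iterF f γ) = iterF f γ ∧
      ∀ s, FinSuppAct (setAct NX.act) s → f s = s → iterF f γ ⊆ s)  := by
  classical
  have h0 : iterF f 0 = ∅ := Ordinal.limitRecOn_zero ..
  have hsucc : ∀ o : Ordinal, iterF f (Order.succ o) = f (iterF f o) := fun o =>
    Ordinal.limitRecOn_succ ..
  have hlim : ∀ o : Ordinal, Order.IsSuccLimit o →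
      iterF f o = ⋃ (a : Ordinal) (_ : a < o), iterF f a := fun o h =>
    Ordinal.limitRecOn_limit o _ _ _ h
  -- Part 1: support
  have hsup : ∀ α : Ordinal, SupportsAct (setAct NX.act) N (iterF f α) := by
    intro α
    induction α using Ordinal.limitRecOn with
    | zero =>
      intro π hπ hfix
      rw [h0]
      simp [setAct]
    | add_one b ih =>
      intro π hπ hfix
      rw [← Order.succ_eq_add_one]
      rw [hsucc, hsupp π hπ hfix, ih π hπ hfix]
    | limit o ho ih =>
      intro π hπ hfix
      rw [hlim o ho]
      simp only [setAct, Set.image_iUnion]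
      exact Set.iUnion_congr fun a => Set.iUnion_congr fun ha => ih a ha π hπ hfix
  have hfs : ∀ α : Ordinal, FinSuppAct (setAct NX.act) (iterF f α) := fun α =>
    ⟨N, hN, hsup α⟩
  -- increasing into one step
  have hQ : ∀ α : Ordinal, iterF f α ⊆ f (iterF f α) := by
    intro α
    induction α using Ordinal.limitRecOn with
    | zero => rw [h0]; exact Set.empty_subset _
    | add_one b ih =>
      rw [← Order.succ_eq_add_one, hsucc]
      exact hmono _ _ (hfs b) (hmap _ (hfs b)) ih
    | limit o ho ih =>
      nth_rewrite 1 [hlim o ho]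
      apply Set.iUnion₂_subset
      intro a ha
      refine (ih a ha).trans (hmono _ _ (hfs a) (hfs o) ?_)
      rw [hlim o ho]
      exact Set.subset_iUnion₂ (s := fun a (_ : a < o) => iterF f a) a ha
  -- Part 2: monotone
  have hmono' : ∀ β α : Ordinal, α ≤ β → iterF f α ⊆ iterF f β := by
    intro β
    induction β using Ordinal.limitRecOn with
    | zero =>
      intro α hα
      rw [nonpos_iff_eq_zero.mp hα]
    | add_one b ih =>
      intro α hα
      rw [← Order.succ_eq_add_one] at hα ⊢
      rcases eq_or_lt_of_le hα with rfl | h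
      · exact subset_rfl
      · refine (ih α (Order.lt_succ_iff.mp h)).trans ?_
        rw [hsucc]
        exact hQ b
    | limit o ho ih =>
      intro α hα
      rcases eq_or_lt_of_le hα with rfl | h
      · exact subset_rfl
      · rw [hlim o ho]
        exact Set.subset_iUnion₂ (s := fun a (_ : a < o) => iterF f a) α h
  refine ⟨hsup, fun α β h => hmono' β α h, ?_⟩
  -- below any fixpoint
  have hbelow : ∀ s, FinSuppAct (setAct NX.act) s → f s = s →
      ∀ α : Ordinal, iterF f α ⊆ s := by
    intro s hs hfix α
    induction α using Ordinal.limitRecOn with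
    | zero => rw [h0]; exact Set.empty_subset _
    | add_one b ih =>
      rw [← Order.succ_eq_add_one, hsucc]
      exact hfix ▸ hmono _ _ (hfs b) hs ih
    | limit o ho ih =>
      rw [hlim o ho]
      exact Set.iUnion₂_subset ih
  intro ν hν
  have hfix : ∃ γ : Ordinal, γ < ν.ord ∧ f (iterF f γ) = iterF f γ := by
    by_contra hcon
    push_neg at hcon
    have hchoice : ∀ γ : Set.Iio ν.ord,
        ∃ x, x ∈ iterF f (Order.succ γ.1) ∧ x ∉ iterF f γ.1 := by
      rintro ⟨γ, hγ⟩
      by_contra hx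
      push_neg at hx
      have hsub : iterF f (Order.succ γ) ⊆ iterF f γ := fun x hx' => hx x hx'
      have : f (iterF f γ) = iterF f γ := by
        rw [← hsucc]
        exact Set.Subset.antisymm hsub ((hQ γ).trans (hsucc γ ▸ subset_rfl))
      exact hcon γ hγ this
    choose g hg1 hg2 using hchoice
    have key : ∀ a b : Set.Iio ν.ord, a.1 < b.1 → g a ≠ g b := by
      intro a b hab heq
      exact hg2 b (heq ▸ hmono' b.1 (Order.succ a.1) (Order.succ_le_of_lt hab) (hg1 a))
    have hinj : Function.Injective g := by
      intro a b heq
      rcases lt_trichotomy a.1 b.1 with h | h | h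
      · exact absurd heq (key a b h)
      · exact Subtype.ext h
      · exact absurd heq.symm (key b a h)
    have hcard : ν ≤ Cardinal.mk X := by
      have h1 : Cardinal.mk X < ν := hν
      have := Cardinal.mk_le_of_injective
        (f := g ∘ (Ordinal.ToType.mk (o := ν.ord)).symm)
        (hinj.comp (Ordinal.ToType.mk (o := ν.ord)).symm.injective)
      rwa [Cardinal.mk_toType, Cardinal.card_ord] at this
    exact absurd hν (not_lt.mpr hcard)
  obtain ⟨γ, hγ, hfx⟩ := hfix
  exact ⟨γ, hγ, hfx, fun s hs hf => hbelow s hs hf γ⟩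
end

section
/- The L-transform preserves and reflects bisimilarity: EF(F,P) is (strongly) bisimilar to EF(F,Q) in the transformed transition system L(T) if and only if P is F/L-bisimilar to Q in T. -/
open scoped Classical

universe u v

variable {S Pr Ac : Type*}

/-- A nominal transition system together with a nominal set of effects: finitely supported
functions from states to states, applied via `app`, with an equivariant application. -/
structure EffStruct (S Pr Ac E : Type) where
  T : NTS S Pr Ac
  nomE : Nominal E
  app : E → S → S
  app_eqv : ∀ π : Equiv.Perm Atom, IsFinPerm π → ∀ f P,
    T.nomS.act π (app f P) = app (nomE.act π f) (T.nomS.act π P)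

variable {S Pr Ac E : Type}

/-- Finitely supported sets of effects. -/
def EffStruct.FSF (ES : EffStruct S Pr Ac E) (F : Set E) : Prop :=
  FinSuppAct (setAct ES.nomE.act) F

/-- A (general) `L`-bisimulation: a family of symmetric relations indexed by finitely
supported sets of effects, satisfying static implication and simulation under effects. -/
def EffStruct.IsLBisim (ES : EffStruct S Pr Ac E) (L : Ac → Set E → E → Set E)
    (R : Set E → S → S → Prop) : Prop :=
  ∀ F : Set E, ES.FSF F →
    (∀ P Q, R F P Q → R F Q P) ∧
    ∀ P Q, R F P Q →
      (∀ f ∈ F, ∀ φ, ES.T.sat (ES.app f P) φ → ES.T.sat (ES.app f Q) φ) ∧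
      (∀ f ∈ F, ∀ α P',
        (∀ a ∈ ES.T.bn α, a ∉ suppAct ES.T.nomS.act (ES.app f Q) ∧
          a ∉ suppAct (setAct ES.nomE.act) F ∧ a ∉ suppAct ES.nomE.act f) →
        ES.T.tr (ES.app f P) α P' →
        ∃ Q', ES.T.tr (ES.app f Q) α Q' ∧ R (L α F f) P' Q')

/-- `F/L`-bisimilarity. -/
def EffStruct.FLBisim (ES : EffStruct S Pr Ac E) (L : Ac → Set E → E → Set E)
    (F : Set E) (P Q : S) : Prop :=
  ∃ R, ES.IsLBisim L R ∧ R F P Q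

/-- `L` is equivariant. -/
def EffStruct.LEquivariant (ES : EffStruct S Pr Ac E) (L : Ac → Set E → E → Set E) : Prop :=
  ∀ π : Equiv.Perm Atom, IsFinPerm π → ∀ α F f,
    L (ES.T.nomA.act π α) (setAct ES.nomE.act π F) (ES.nomE.act π f)
      = setAct ES.nomE.act π (L α F f)

/-- States of the `L`-transform: `ac f F P` (effect `f ∈ F` has just been applied) and
`ef F P` (effects from `F` may be committed). -/
inductive LTState (S E : Type) : Type
  | ac : E → Set E → S → LTState S E
  | ef : Set E → S → LTState S E

variable {S Pr Ac E : Type}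

/-- The permutation action on `L`-transform states. -/
def ltAct (ES : EffStruct S Pr Ac E) (π : Equiv.Perm Atom) : LTState S E → LTState S E
  | .ac f F P => .ac (ES.nomE.act π f) (setAct ES.nomE.act π F) (ES.T.nomS.act π P)
  | .ef F P => .ef (setAct ES.nomE.act π F) (ES.T.nomS.act π P)

/-- State predicates of the `L`-transform: those of `T` at `ac`-states, none at
`ef`-states. -/
def ltSat (ES : EffStruct S Pr Ac E) : LTState S E → Pr → Prop
  | .ac _ _ P, φ => ES.T.sat P φ
  | .ef _ _, _ => False

/-- Binding names in the `L`-transform: those of `T` for actions, empty for effects. -/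
def ltBn (ES : EffStruct S Pr Ac E) : Ac ⊕ E → Finset Atom
  | .inl α => ES.T.bn α
  | .inr _ => ∅

/-- Transitions of the `L`-transform:
`ac f F P ⟶α⟶ ef (L α F f) P'` whenever `P ⟶α⟶ P'` in `T` with `bn α` fresh for `f, F`,
and `ef F P ⟶f⟶ ac f F (f P)` for each `f ∈ F`. -/
def ltTr (ES : EffStruct S Pr Ac E) (L : Ac → Set E → E → Set E) :
    LTState S E → Ac ⊕ E → LTState S E → Prop :=
  fun s a s' =>
    (∃ f F P α P', s = .ac f F P ∧ a = .inl α ∧ s' = .ef (L α F f) P' ∧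
      (∀ x ∈ ES.T.bn α, x ∉ suppAct ES.nomE.act f ∧
        x ∉ suppAct (setAct ES.nomE.act) F) ∧
      ES.T.tr P α P') ∨
    (∃ f F P, s = .ef F P ∧ a = .inr f ∧ f ∈ F ∧ s' = .ac f F (ES.app f P))

/-- A strong bisimulation on the `L`-transform. -/
def ltIsBisim (ES : EffStruct S Pr Ac E) (L : Ac → Set E → E → Set E)
    (R : LTState S E → LTState S E → Prop) : Prop :=
  (∀ P Q, R P Q → R Q P) ∧
  ∀ P Q, R P Q →
    (∀ φ, ltSat ES P φ → ltSat ES Q φ) ∧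
    (∀ a P', (∀ x ∈ ltBn ES a, x ∉ suppAct (ltAct ES) Q) → ltTr ES L P a P' →
      ∃ Q', ltTr ES L Q a Q' ∧ R P' Q')

/-- Strong bisimilarity on the `L`-transform. -/
def ltBisim (ES : EffStruct S Pr Ac E) (L : Ac → Set E → E → Set E)
    (P Q : LTState S E) : Prop :=
  ∃ R, ltIsBisim ES L R ∧ R P Q

/-!
An `L`-bisimulation `R` induces a bisimulation on `L(T)` relating `EF(F,P)` to `EF(F,Q)` and
`AC(f,F,f P)` to `AC(f,F,f Q)` whenever `R F P Q`. Conversely, a bisimulation on `L(T)` restricted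
to `EF`-states is an `L`-bisimulation: the effect step `EF(F,P) ⟶f⟶ AC(f,F,f P)` must be matched by
the same effect on the other side, and the `AC`-state then moves exactly as `f P` does in `T`.
Equivariance of `L` keeps every effect set `L α F f` reached this way finitely supported.
-/

lemma notMem_suppAct_iff {X : Type*} (act : Equiv.Perm Atom → X → X) (x : X) (a : Atom) :
    a ∉ suppAct act x ↔ ∃ N : Set Atom, N.Finite ∧ SupportsAct act N x ∧ a ∉ N := by
  simp only [suppAct, Set.mem_sInter, Set.mem_ofPred_eq, not_forall, exists_prop, and_assoc]

section Support

variable {ES : EffStruct S Pr Ac E}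

lemma supportsAct_ltAct_ac {Nf NF NP : Set Atom} {f : E} {F : Set E} {P : S}
    (hf : SupportsAct ES.nomE.act Nf f) (hF : SupportsAct (setAct ES.nomE.act) NF F)
    (hP : SupportsAct ES.T.nomS.act NP P) :
    SupportsAct (ltAct ES) (Nf ∪ NF ∪ NP) (.ac f F P) := by
  intro π hπ hfix
  simp only [ltAct, hf π hπ fun a ha => hfix a (.inl (.inl ha)),
    hF π hπ fun a ha => hfix a (.inl (.inr ha)), hP π hπ fun a ha => hfix a (.inr ha)]

lemma notMem_suppAct_ltAct_ac {f : E} {F : Set E} {P : S} {a : Atom}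
    (hf : a ∉ suppAct ES.nomE.act f) (hF : a ∉ suppAct (setAct ES.nomE.act) F)
    (hP : a ∉ suppAct ES.T.nomS.act P) : a ∉ suppAct (ltAct ES) (.ac f F P) := by
  rw [notMem_suppAct_iff] at hf hF hP ⊢
  obtain ⟨Nf, hNf, hsf, haf⟩ := hf
  obtain ⟨NF, hNF, hsF, haF⟩ := hF
  obtain ⟨NP, hNP, hsP, haP⟩ := hP
  refine ⟨Nf ∪ NF ∪ NP, (hNf.union hNF).union hNP, supportsAct_ltAct_ac hsf hsF hsP, ?_⟩
  simp only [Set.mem_union, not_or]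
  exact ⟨⟨haf, haF⟩, haP⟩

lemma notMem_suppAct_of_notMem_suppAct_ltAct_ac {f : E} {F : Set E} {P : S} {a : Atom}
    (h : a ∉ suppAct (ltAct ES) (.ac f F P)) : a ∉ suppAct ES.T.nomS.act P := by
  rw [notMem_suppAct_iff] at h ⊢
  obtain ⟨N, hN, hs, ha⟩ := h
  refine ⟨N, hN, fun π hπ hfix => ?_, ha⟩
  have h := hs π hπ hfix
  simp only [ltAct, LTState.ac.injEq] at h
  exact h.2.2

lemma EffStruct.LEquivariant.fsf {L : Ac → Set E → E → Set E} (hL : ES.LEquivariant L)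
    (α : Ac) (f : E) {F : Set E} (hF : ES.FSF F) : ES.FSF (L α F f) := by
  obtain ⟨Nα, hNα, hsα⟩ := ES.T.nomA.finSupp α
  obtain ⟨Nf, hNf, hsf⟩ := ES.nomE.finSupp f
  obtain ⟨NF, hNF, hsF⟩ := hF
  refine ⟨Nα ∪ Nf ∪ NF, (hNα.union hNf).union hNF, fun π hπ hfix => ?_⟩
  have h := hL π hπ α F f
  rw [hsα π hπ fun a ha => hfix a (.inl (.inl ha)),
    hsf π hπ fun a ha => hfix a (.inl (.inr ha)), hsF π hπ fun a ha => hfix a (.inr ha)] at h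
  exact h.symm

end Support

section Transitions

variable {ES : EffStruct S Pr Ac E} {L : Ac → Set E → E → Set E}

lemma ltTr_ef_iff {F : Set E} {P : S} {a : Ac ⊕ E} {s : LTState S E} :
    ltTr ES L (.ef F P) a s ↔ ∃ f ∈ F, a = .inr f ∧ s = .ac f F (ES.app f P) := by
  constructor
  · rintro (⟨_, _, _, _, _, h, -⟩ | ⟨f, _, _, h, rfl, hf, rfl⟩) <;> cases h
    exact ⟨f, hf, rfl, rfl⟩
  · rintro ⟨f, hf, rfl, rfl⟩
    exact .inr ⟨f, F, P, rfl, rfl, hf, rfl⟩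

lemma ltTr_ac_iff {f : E} {F : Set E} {P : S} {a : Ac ⊕ E} {s : LTState S E} :
    ltTr ES L (.ac f F P) a s ↔ ∃ α P', a = .inl α ∧ s = .ef (L α F f) P' ∧
      (∀ x ∈ ES.T.bn α, x ∉ suppAct ES.nomE.act f ∧ x ∉ suppAct (setAct ES.nomE.act) F) ∧
      ES.T.tr P α P' := by
  constructor
  · rintro (⟨_, _, _, α, P', h, rfl, rfl, hfresh, htr⟩ | ⟨_, _, _, h, -⟩) <;> cases h
    exact ⟨α, P', rfl, rfl, hfresh, htr⟩
  · rintro ⟨α, P', rfl, rfl, hfresh, htr⟩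
    exact .inl ⟨f, F, P, α, P', rfl, rfl, rfl, hfresh, htr⟩

end Transitions

section BisimOfLTransform

variable {ES : EffStruct S Pr Ac E} {L : Ac → Set E → E → Set E}
  {R : LTState S E → LTState S E → Prop}

lemma ltIsBisim.rel_ac_of_rel_ef (hR : ltIsBisim ES L R) {f : E} {F : Set E} {P Q : S}
    (hPQ : R (.ef F P) (.ef F Q)) (hf : f ∈ F) :
    R (.ac f F (ES.app f P)) (.ac f F (ES.app f Q)) := by
  obtain ⟨s, hs, hRs⟩ :=
    (hR.2 _ _ hPQ).2 (.inr f) _ (by simp [ltBn]) (ltTr_ef_iff.2 ⟨f, hf, rfl, rfl⟩)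
  obtain ⟨g, -, hg, rfl⟩ := ltTr_ef_iff.1 hs
  cases hg
  exact hRs

lemma ltIsBisim.isLBisim (hR : ltIsBisim ES L R) :
    ES.IsLBisim L fun F P Q => R (.ef F P) (.ef F Q) := by
  refine fun F _ => ⟨fun P Q => hR.1 _ _, fun P Q hPQ => ⟨?_, ?_⟩⟩
  · exact fun f hf => (hR.2 _ _ (hR.rel_ac_of_rel_ef hPQ hf)).1
  · intro f hf α P' hfresh htr
    obtain ⟨s, hs, hRs⟩ := (hR.2 _ _ (hR.rel_ac_of_rel_ef hPQ hf)).2 (.inl α) _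
      (fun x hx => notMem_suppAct_ltAct_ac (hfresh x hx).2.2 (hfresh x hx).2.1 (hfresh x hx).1)
      (ltTr_ac_iff.2 ⟨α, P', rfl, rfl, fun x hx => ⟨(hfresh x hx).2.2, (hfresh x hx).2.1⟩, htr⟩)
    obtain ⟨β, Q', hβ, rfl, -, htrQ⟩ := ltTr_ac_iff.1 hs
    cases hβ
    exact ⟨Q', htrQ, hRs⟩

end BisimOfLTransform

inductive EffStruct.ltLift (ES : EffStruct S Pr Ac E) (R : Set E → S → S → Prop) :
    LTState S E → LTState S E → Prop
  | ef {F : Set E} {P Q : S} : ES.FSF F → R F P Q → ES.ltLift R (.ef F P) (.ef F Q)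
  | ac {f : E} {F : Set E} {P Q : S} : f ∈ F → ES.FSF F → R F P Q →
      ES.ltLift R (.ac f F (ES.app f P)) (.ac f F (ES.app f Q))

section LTransformOfLBisim

variable {ES : EffStruct S Pr Ac E} {L : Ac → Set E → E → Set E} {R : Set E → S → S → Prop}

lemma EffStruct.IsLBisim.ltLift_symm (hR : ES.IsLBisim L R) {s t : LTState S E} :
    ES.ltLift R s t → ES.ltLift R t s
  | .ef hF h => .ef hF ((hR _ hF).1 _ _ h)
  | .ac hf hF h => .ac hf hF ((hR _ hF).1 _ _ h)

lemma ltLift_simulate_ef {F : Set E} {P Q : S} (hF : ES.FSF F) (hPQ : R F P Q)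
    {a : Ac ⊕ E} {s : LTState S E} (htr : ltTr ES L (.ef F P) a s) :
    ∃ t, ltTr ES L (.ef F Q) a t ∧ ES.ltLift R s t := by
  obtain ⟨f, hf, rfl, rfl⟩ := ltTr_ef_iff.1 htr
  exact ⟨_, ltTr_ef_iff.2 ⟨f, hf, rfl, rfl⟩, .ac hf hF hPQ⟩

lemma EffStruct.IsLBisim.ltLift_simulate_ac (hL : ES.LEquivariant L) (hR : ES.IsLBisim L R)
    {f : E} {F : Set E} {P Q : S} (hf : f ∈ F) (hF : ES.FSF F) (hPQ : R F P Q)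
    {a : Ac ⊕ E} {s : LTState S E}
    (hfresh : ∀ x ∈ ltBn ES a, x ∉ suppAct (ltAct ES) (.ac f F (ES.app f Q)))
    (htr : ltTr ES L (.ac f F (ES.app f P)) a s) :
    ∃ t, ltTr ES L (.ac f F (ES.app f Q)) a t ∧ ES.ltLift R s t := by
  obtain ⟨α, P', rfl, rfl, hfreshFf, htrP⟩ := ltTr_ac_iff.1 htr
  obtain ⟨Q', htrQ, hRQ⟩ := ((hR F hF).2 P Q hPQ).2 f hf α P'
    (fun x hx => ⟨notMem_suppAct_of_notMem_suppAct_ltAct_ac (hfresh x hx),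
      (hfreshFf x hx).2, (hfreshFf x hx).1⟩) htrP
  exact ⟨_, ltTr_ac_iff.2 ⟨α, Q', rfl, rfl, hfreshFf, htrQ⟩, .ef (hL.fsf α f hF) hRQ⟩

lemma EffStruct.IsLBisim.ltIsBisim_ltLift (hL : ES.LEquivariant L) (hR : ES.IsLBisim L R) :
    ltIsBisim ES L (ES.ltLift R) := by
  refine ⟨fun _ _ => hR.ltLift_symm, ?_⟩
  rintro _ _ (⟨hF, hPQ⟩ | ⟨hf, hF, hPQ⟩)
  · exact ⟨fun _ h => h.elim, fun _ _ _ => ltLift_simulate_ef hF hPQ⟩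
  · exact ⟨((hR _ hF).2 _ _ hPQ).1 _ hf, fun _ _ => hR.ltLift_simulate_ac hL hf hF hPQ⟩

end LTransformOfLBisim

/-- The `L`-transform preserves and reflects bisimilarity: `EF(F,P) ∼ EF(F,Q)` in `L(T)`
iff `P` and `Q` are `F/L`-bisimilar in `T`. -/
theorem ltransform_bisim_iff {S Pr Ac E : Type} (ES : EffStruct S Pr Ac E)
    (L : Ac → Set E → E → Set E) (hL : ES.LEquivariant L)
    (F : Set E) (hF : ES.FSF F) (P Q : S) :
    ltBisim ES L (.ef F P) (.ef F Q) ↔ ES.FLBisim L F P Q := by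
  constructor
  · rintro ⟨R, hR, hPQ⟩
    exact ⟨_, hR.isLBisim, hPQ⟩
  · rintro ⟨R, hR, hPQ⟩
    exact ⟨_, hR.ltIsBisim_ltLift hL, .ef hF hPQ⟩
end

section
/- Interpolation lemma for weak bisimilarity: if P ⟹ Q ⟹ R (sequences of τ-steps) and P ≈ R, then Q ≈ R. -/
open scoped Classical

universe u v

variable {S Pr Ac : Type*}

/-- `P ⟹ P'`: a finite (possibly empty) sequence of `τ`-transitions. -/
inductive TauStar (T : NTS S Pr Ac) (τ : Ac) : S → S → Prop
  | refl (P : S) : TauStar T τ P P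
  | step {P P'' P' : S} : T.tr P τ P'' → TauStar T τ P'' P' → TauStar T τ P P'

/-- The weak transition `P ⟹α⟹ P'`: just `⟹` if `α = τ`, otherwise
`⟹ ∘ ⟶α⟶ ∘ ⟹`. -/
def NTS.weakTr (T : NTS S Pr Ac) (τ : Ac) (P : S) (α : Ac) (P' : S) : Prop :=
  if α = τ then TauStar T τ P P'
  else ∃ P₁ P₂, TauStar T τ P P₁ ∧ T.tr P₁ α P₂ ∧ TauStar T τ P₂ P'

/-- A weak bisimulation: symmetric, satisfying weak static implication and weak
simulation. -/
def NTS.IsWeakBisim (T : NTS S Pr Ac) (τ : Ac) (R : S → S → Prop) : Prop :=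
  (∀ P Q, R P Q → R Q P) ∧
  ∀ P Q, R P Q →
    (∀ φ, T.sat P φ → ∃ Q', TauStar T τ Q Q' ∧ T.sat Q' φ ∧ R P Q') ∧
    (∀ α P', (∀ a ∈ T.bn α, a ∉ suppAct T.nomS.act Q) → T.tr P α P' →
      ∃ Q', T.weakTr τ Q α Q' ∧ R P' Q')

/-- Weak bisimilarity. -/
def NTS.WBisim (T : NTS S Pr Ac) (τ : Ac) (P Q : S) : Prop :=
  ∃ R, T.IsWeakBisim τ R ∧ R P Q


section Aux

variable {S Pr Ac X : Type*}

lemma isFinPerm_swap (a b : Atom) : IsFinPerm (Equiv.swap a b) := by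
  apply Set.Finite.subset (((Set.finite_singleton b).insert a))
  intro x hx
  by_contra h
  simp only [Set.mem_insert_iff, Set.mem_singleton_iff, not_or] at h
  exact hx (Equiv.swap_apply_of_ne_of_ne h.1 h.2)

lemma isFinPerm_conj (s σ : Equiv.Perm Atom) (hσ : IsFinPerm σ) :
    IsFinPerm (s⁻¹ * σ * s) := by
  have hsub : {x : Atom | (s⁻¹ * σ * s) x ≠ x} ⊆ s ⁻¹' {x | σ x ≠ x} := by
    intro x hx
    simp only [Set.mem_setOf_eq, Equiv.Perm.mul_apply, Set.mem_preimage]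
    intro h
    apply hx
    simp only [Set.mem_setOf_eq, Equiv.Perm.mul_apply, h]
    simp
  exact (hσ.preimage (s.injective.injOn)).subset hsub

lemma act_swap_swap (NX : Nominal X) (a b : Atom) (x : X) :
    NX.act (Equiv.swap a b) (NX.act (Equiv.swap a b) x) = x := by
  rw [← NX.act_mul, Equiv.swap_mul_self, NX.act_one]

lemma supp_subset (NX : Nominal X) {N : Set Atom} {x : X} (hNf : N.Finite)
    (hN : SupportsAct NX.act N x) : suppAct NX.act x ⊆ N :=
  Set.sInter_subset_of_mem ⟨hNf, hN⟩

lemma supp_finite (NX : Nominal X) (x : X) : (suppAct NX.act x).Finite := by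
  obtain ⟨N, hNf, hN⟩ := NX.finSupp x
  exact hNf.subset (supp_subset NX hNf hN)

lemma fresh_swap (NX : Nominal X) {a b : Atom} {x : X}
    (ha : a ∉ suppAct NX.act x) (hb : b ∉ suppAct NX.act x) :
    NX.act (Equiv.swap a b) x = x := by
  by_cases hab : a = b
  · subst hab
    rw [Equiv.swap_self]
    exact NX.act_one x
  · -- extract finite supports avoiding a and b
    rw [suppAct, Set.mem_sInter] at ha hb
    push_neg at ha hb
    obtain ⟨Na, ⟨hNaf, hNas⟩, haNa⟩ := ha
    obtain ⟨Nb, ⟨hNbf, hNbs⟩, hbNb⟩ := hb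
    obtain ⟨c, hc⟩ := ((hNaf.union hNbf).union (((Set.finite_singleton b).insert a))).infinite_compl.nonempty
    simp only [Set.mem_compl_iff, Set.mem_union, Set.mem_insert_iff,
      Set.mem_singleton_iff, not_or] at hc
    obtain ⟨⟨hcNa, hcNb⟩, hca, hcb⟩ := hc
    have hac : NX.act (Equiv.swap a c) x = x := by
      apply hNas _ (isFinPerm_swap a c)
      intro n hn
      exact Equiv.swap_apply_of_ne_of_ne (fun h => haNa (h ▸ hn)) (fun h => hcNa (h ▸ hn))
    have hbc : NX.act (Equiv.swap b c) x = x := by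
      apply hNbs _ (isFinPerm_swap b c)
      intro n hn
      exact Equiv.swap_apply_of_ne_of_ne (fun h => hbNb (h ▸ hn)) (fun h => hcNb (h ▸ hn))
    have key : Equiv.swap a b =
        Equiv.swap c a * Equiv.swap b c * Equiv.swap c a := by
      rw [Equiv.swap_mul_swap_mul_swap (fun h => hcb h.symm) (Ne.symm hab)]
    rw [key, NX.act_mul, NX.act_mul, Equiv.swap_comm c a, hac, hbc, hac]

lemma supports_swap_image (NX : Nominal X) {N : Set Atom} {x : X} (s : Equiv.Perm Atom)
    (_hs : IsFinPerm s) (hN : SupportsAct NX.act N x) :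
    SupportsAct NX.act (s '' N) (NX.act s x) := by
  intro σ hσ hfix
  have h1 : NX.act (s⁻¹ * σ * s) x = x := by
    apply hN _ (isFinPerm_conj s σ hσ)
    intro n hn
    have : σ (s n) = s n := hfix _ ⟨n, hn, rfl⟩
    simp [Equiv.Perm.mul_apply, this]
  calc NX.act σ (NX.act s x) = NX.act (σ * s) x := (NX.act_mul _ _ _).symm
    _ = NX.act (s * (s⁻¹ * σ * s)) x := by
        congr 1
        group
    _ = NX.act s (NX.act (s⁻¹ * σ * s) x) := NX.act_mul _ _ _
    _ = NX.act s x := by rw [h1]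

lemma supp_act_subset (NX : Nominal X) (s : Equiv.Perm Atom) (hs : IsFinPerm s) (x : X) :
    suppAct NX.act (NX.act s x) ⊆ s '' (suppAct NX.act x) := by
  intro y hy
  refine ⟨s⁻¹ y, ?_, by simp⟩
  rw [suppAct, Set.mem_sInter]
  rintro N ⟨hNf, hNs⟩
  have hmem : y ∈ s '' N := by
    rw [suppAct, Set.mem_sInter] at hy
    exact hy _ ⟨hNf.image _, supports_swap_image NX s hs hNs⟩
  obtain ⟨n, hn, rfl⟩ := hmem
  simpa using hn

variable (T : NTS S Pr Ac) (τ : Ac)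

lemma tauStar_trans {P Q R : S} (h1 : TauStar T τ P Q) (h2 : TauStar T τ Q R) :
    TauStar T τ P R := by
  induction h1 with
  | refl _ => exact h2
  | step htr _ ih => exact TauStar.step htr (ih h2)

lemma tr_weakTr {P P' : S} {α : Ac} (h : T.tr P α P') : T.weakTr τ P α P' := by
  unfold NTS.weakTr
  split_ifs with hα
  · subst hα; exact TauStar.step h (TauStar.refl _)
  · exact ⟨P, P', TauStar.refl _, h, TauStar.refl _⟩

lemma tauStar_weakTr {P P' : S} (h : TauStar T τ P P') : T.weakTr τ P τ P' := by
  unfold NTS.weakTr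
  simp [h]

lemma weakTr_tauStar {P P' : S} (h : T.weakTr τ P τ P') : TauStar T τ P P' := by
  unfold NTS.weakTr at h
  simpa using h

variable (hτ : suppAct T.nomA.act τ = ∅)

include hτ

lemma tau_swap (a b : Atom) : T.nomA.act (Equiv.swap a b) τ = τ :=
  fresh_swap T.nomA (by simp [hτ]) (by simp [hτ])

lemma bn_tau (a : Atom) (ha : a ∈ T.bn τ) : False := by
  have := T.bn_supp τ ha
  rw [hτ] at this
  exact this

lemma tauStar_swap (a b : Atom) {P P' : S} (h : TauStar T τ P P') :
    TauStar T τ (T.nomS.act (Equiv.swap a b) P) (T.nomS.act (Equiv.swap a b) P') := by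
  induction h with
  | refl _ => exact TauStar.refl _
  | step htr _ ih =>
      refine TauStar.step ?_ ih
      have := T.tr_eqv _ (isFinPerm_swap a b) _ _ _ htr
      rwa [tau_swap T τ hτ] at this

lemma weakTr_swap (a b : Atom) {P P' : S} {α : Ac} (h : T.weakTr τ P α P') :
    T.weakTr τ (T.nomS.act (Equiv.swap a b) P) (T.nomA.act (Equiv.swap a b) α)
      (T.nomS.act (Equiv.swap a b) P') := by
  unfold NTS.weakTr at h ⊢
  by_cases hα : α = τ
  · rw [if_pos hα] at h
    rw [if_pos (by rw [hα]; exact tau_swap T τ hτ a b)]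
    exact tauStar_swap T τ hτ a b h
  · rw [if_neg hα] at h
    have hα' : T.nomA.act (Equiv.swap a b) α ≠ τ := by
      intro hc
      apply hα
      have : T.nomA.act (Equiv.swap a b) (T.nomA.act (Equiv.swap a b) α)
          = T.nomA.act (Equiv.swap a b) τ := by rw [hc]
      rwa [act_swap_swap, tau_swap T τ hτ] at this
    rw [if_neg hα']
    obtain ⟨P₁, P₂, ht1, ht2, ht3⟩ := h
    exact ⟨_, _, tauStar_swap T τ hτ a b ht1,
      T.tr_eqv _ (isFinPerm_swap a b) _ _ _ ht2, tauStar_swap T τ hτ a b ht3⟩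

omit hτ

lemma wb_symm {P Q : S} (h : T.WBisim τ P Q) : T.WBisim τ Q P := by
  obtain ⟨R0, hR0, hPQ⟩ := h
  exact ⟨R0, hR0, hR0.1 _ _ hPQ⟩

lemma wb_refl (P : S) : T.WBisim τ P P := by
  refine ⟨Eq, ⟨fun _ _ h => h.symm, ?_⟩, rfl⟩
  rintro P Q rfl
  constructor
  · intro φ hφ
    exact ⟨P, TauStar.refl _, hφ, rfl⟩
  · intro α P' _ htr
    exact ⟨P', tr_weakTr T τ htr, rfl⟩

lemma wb_isWeakBisim : T.IsWeakBisim τ (T.WBisim τ) := by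
  constructor
  · intro P Q h; exact wb_symm T τ h
  · rintro P Q ⟨R0, hR0, hPQ⟩
    constructor
    · intro φ hφ
      obtain ⟨Q', h1, h2, h3⟩ := (hR0.2 _ _ hPQ).1 φ hφ
      exact ⟨Q', h1, h2, ⟨R0, hR0, h3⟩⟩
    · intro α P' hfresh htr
      obtain ⟨Q', h1, h2⟩ := (hR0.2 _ _ hPQ).2 α P' hfresh htr
      exact ⟨Q', h1, ⟨R0, hR0, h2⟩⟩

include hτ

lemma wb_swap (a b : Atom) {P Q : S} (h : T.WBisim τ P Q) :
    T.WBisim τ (T.nomS.act (Equiv.swap a b) P) (T.nomS.act (Equiv.swap a b) Q) := by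
  classical
  obtain ⟨R0, hR0, hPQ⟩ := h
  refine ⟨fun A B => R0 (T.nomS.act (Equiv.swap a b) A) (T.nomS.act (Equiv.swap a b) B), ?_, ?_⟩
  · constructor
    · intro A B hAB
      exact hR0.1 _ _ hAB
    · intro A B hAB
      constructor
      · intro φ hφ
        have hφ' : T.sat (T.nomS.act (Equiv.swap a b) A) (T.nomP.act (Equiv.swap a b) φ) :=
          T.sat_eqv _ (isFinPerm_swap a b) _ _ hφ
        obtain ⟨Q', h1, h2, h3⟩ := (hR0.2 _ _ hAB).1 _ hφ'
        refine ⟨T.nomS.act (Equiv.swap a b) Q', ?_, ?_, ?_⟩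
        · have := tauStar_swap T τ hτ a b h1
          rwa [act_swap_swap] at this
        · have := T.sat_eqv _ (isFinPerm_swap a b) _ _ h2
          rwa [act_swap_swap] at this
        · show R0 (T.nomS.act (Equiv.swap a b) A)
            (T.nomS.act (Equiv.swap a b) (T.nomS.act (Equiv.swap a b) Q'))
          rwa [act_swap_swap]
      · intro α A' hfresh htr
        have htr' : T.tr (T.nomS.act (Equiv.swap a b) A) (T.nomA.act (Equiv.swap a b) α) (T.nomS.act (Equiv.swap a b) A') :=
          T.tr_eqv _ (isFinPerm_swap a b) _ _ _ htr
        have hfresh' : ∀ c ∈ T.bn (T.nomA.act (Equiv.swap a b) α),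
            c ∉ suppAct T.nomS.act (T.nomS.act (Equiv.swap a b) B) := by
          intro c hc hmem
          have hc' : (c : Atom) ∈ (Equiv.swap a b) '' (T.bn α : Set Atom) := by
            rw [← T.bn_eqv _ (isFinPerm_swap a b)]
            exact_mod_cast hc
          obtain ⟨d, hd, rfl⟩ := hc'
          have := supp_act_subset T.nomS (Equiv.swap a b) (isFinPerm_swap a b) B hmem
          obtain ⟨e, he, heq⟩ := this
          have : d = e := (Equiv.swap a b).injective heq.symm
          exact hfresh d hd (this ▸ he)
        obtain ⟨Q', h1, h2⟩ := (hR0.2 _ _ hAB).2 _ _ hfresh' htr'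
        refine ⟨T.nomS.act (Equiv.swap a b) Q', ?_, ?_⟩
        · have := weakTr_swap T τ hτ a b h1
          rwa [act_swap_swap, act_swap_swap] at this
        · show R0 (T.nomS.act (Equiv.swap a b) A')
            (T.nomS.act (Equiv.swap a b) (T.nomS.act (Equiv.swap a b) Q'))
          rwa [act_swap_swap]
  · show R0 (T.nomS.act (Equiv.swap a b) (T.nomS.act (Equiv.swap a b) P)) (T.nomS.act (Equiv.swap a b) (T.nomS.act (Equiv.swap a b) Q))
    rwa [act_swap_swap, act_swap_swap]

lemma tau_answer {P Q P' : S} (h : T.WBisim τ P Q) (hst : TauStar T τ P P') :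
    ∃ Q', TauStar T τ Q Q' ∧ T.WBisim τ P' Q' := by
  induction hst generalizing Q with
  | refl P => exact ⟨Q, TauStar.refl _, h⟩
  | step htr _ ih =>
      obtain ⟨Q₁, hw, hb⟩ := ((wb_isWeakBisim T τ).2 _ _ h).2 τ _
        (fun a ha => absurd ha (fun ha => bn_tau T τ hτ a ha)) htr
      obtain ⟨Q', hQ', hb'⟩ := ih hb
      exact ⟨Q', tauStar_trans T τ (weakTr_tauStar T τ hw) hQ', hb'⟩

lemma sim_answer {Q Q₁ A : S} (hQQ₁ : TauStar T τ Q Q₁) (hWB : T.WBisim τ A Q₁) :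
    ∀ n (α : Ac) (A' : S), T.tr A α A' → α ≠ τ →
    (∀ a ∈ T.bn α, a ∉ suppAct T.nomS.act Q) →
    ((T.bn α : Set Atom) ∩ suppAct T.nomS.act Q₁).ncard ≤ n →
    ∃ M₁ M₂ Q₂, TauStar T τ Q M₁ ∧ T.tr M₁ α M₂ ∧ TauStar T τ M₂ Q₂ ∧
      T.WBisim τ A' Q₂ := by
  intro n
  induction n with
  | zero =>
      intro α A' htr hne hfresh hcard
      -- the intersection is empty
      have hfin : ((T.bn α : Set Atom) ∩ suppAct T.nomS.act Q₁).Finite :=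
        (T.bn α).finite_toSet.inter_of_left _
      have hempty : ((T.bn α : Set Atom) ∩ suppAct T.nomS.act Q₁) = ∅ := by
        rw [← Set.ncard_eq_zero hfin]
        omega
      have hfresh₁ : ∀ a ∈ T.bn α, a ∉ suppAct T.nomS.act Q₁ := by
        intro a ha hmem
        have : a ∈ ((T.bn α : Set Atom) ∩ suppAct T.nomS.act Q₁) := ⟨ha, hmem⟩
        rw [hempty] at this
        exact this
      obtain ⟨Q₂, hw, hb⟩ := ((wb_isWeakBisim T τ).2 _ _ hWB).2 α A' hfresh₁ htr
      rw [NTS.weakTr, if_neg hne] at hw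
      obtain ⟨M₁, M₂, h1', h2', h3'⟩ := hw
      exact ⟨M₁, M₂, Q₂, tauStar_trans T τ hQQ₁ h1', h2', h3', hb⟩
  | succ n ih =>
      intro α A' htr hne hfresh hcard
      by_cases hempty : ((T.bn α : Set Atom) ∩ suppAct T.nomS.act Q₁) = ∅
      · -- same as base case
        have hfresh₁ : ∀ a ∈ T.bn α, a ∉ suppAct T.nomS.act Q₁ := by
          intro a ha hmem
          have : a ∈ ((T.bn α : Set Atom) ∩ suppAct T.nomS.act Q₁) := ⟨ha, hmem⟩
          rw [hempty] at this
          exact this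
        obtain ⟨Q₂, hw, hb⟩ := ((wb_isWeakBisim T τ).2 _ _ hWB).2 α A' hfresh₁ htr
        rw [NTS.weakTr, if_neg hne] at hw
        obtain ⟨M₁, M₂, h1', h2', h3'⟩ := hw
        exact ⟨M₁, M₂, Q₂, tauStar_trans T τ hQQ₁ h1', h2', h3', hb⟩
      · obtain ⟨a, haα, haQ₁⟩ := Set.nonempty_iff_ne_empty.mpr hempty
        have haα' : a ∈ T.bn α := haα
        -- choose a fresh atom b
        have hFfin : ((suppAct T.nomA.act α ∪ suppAct T.nomS.act A') ∪
            (suppAct T.nomS.act Q₁ ∪ suppAct T.nomS.act Q)).Finite :=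
          ((supp_finite T.nomA α).union (supp_finite T.nomS A')).union
            ((supp_finite T.nomS Q₁).union (supp_finite T.nomS Q))
        obtain ⟨b, hb⟩ := hFfin.infinite_compl.nonempty
        simp only [Set.mem_compl_iff, Set.mem_union, not_or] at hb
        obtain ⟨⟨hbα, hbA'⟩, hbQ₁, hbQ⟩ := hb
        set s := Equiv.swap a b with hsdef
        have hbbn : b ∉ (T.bn α : Set Atom) := fun hmem => hbα (T.bn_supp α hmem)
        have htr' : T.tr A (T.nomA.act s α) (T.nomS.act s A') :=
          T.tr_alpha a b A α A' haα' hbα hbA' htr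
        have hbn' : (T.bn (T.nomA.act s α) : Set Atom) = s '' (T.bn α : Set Atom) :=
          T.bn_eqv _ (isFinPerm_swap a b) α
        have hne' : T.nomA.act s α ≠ τ := by
          intro hc
          apply hne
          have : T.nomA.act s (T.nomA.act s α) = T.nomA.act s τ := by rw [hc]
          rwa [act_swap_swap, tau_swap T τ hτ] at this
        have hmemchar : ∀ c : Atom, c ∈ (T.bn (T.nomA.act s α) : Set Atom) →
            c = b ∨ (c ∈ (T.bn α : Set Atom) ∧ c ≠ a ∧ c ≠ b) := by
          intro c hc
          rw [hbn'] at hc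
          obtain ⟨d, hd, rfl⟩ := hc
          by_cases hda : d = a
          · subst hda; left; simp [hsdef]
          · by_cases hdb : d = b
            · exact absurd (hdb ▸ hd) hbbn
            · right
              rw [hsdef, Equiv.swap_apply_of_ne_of_ne hda hdb]
              exact ⟨hd, hda, hdb⟩
        have hfresh' : ∀ c ∈ T.bn (T.nomA.act s α), c ∉ suppAct T.nomS.act Q := by
          intro c hc
          rcases hmemchar c hc with rfl | ⟨hcα, _, _⟩
          · exact hbQ
          · exact hfresh c hcα
        have hsubset : ((T.bn (T.nomA.act s α) : Set Atom) ∩ suppAct T.nomS.act Q₁) ⊆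
            ((T.bn α : Set Atom) ∩ suppAct T.nomS.act Q₁) \ {a} := by
          rintro c ⟨hc1, hc2⟩
          rcases hmemchar c hc1 with rfl | ⟨hcα, hca, _⟩
          · exact absurd hc2 hbQ₁
          · exact ⟨⟨hcα, hc2⟩, hca⟩
        have hfinI : ((T.bn α : Set Atom) ∩ suppAct T.nomS.act Q₁).Finite :=
          (T.bn α).finite_toSet.inter_of_left _
        have hcard' : ((T.bn (T.nomA.act s α) : Set Atom) ∩
            suppAct T.nomS.act Q₁).ncard ≤ n := by
          have h1 : ((T.bn (T.nomA.act s α) : Set Atom) ∩ suppAct T.nomS.act Q₁).ncard ≤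
              (((T.bn α : Set Atom) ∩ suppAct T.nomS.act Q₁) \ {a}).ncard :=
            Set.ncard_le_ncard hsubset hfinI.diff
          have h2 : (((T.bn α : Set Atom) ∩ suppAct T.nomS.act Q₁) \ {a}).ncard <
              ((T.bn α : Set Atom) ∩ suppAct T.nomS.act Q₁).ncard :=
            Set.ncard_diff_singleton_lt_of_mem ⟨haα, haQ₁⟩ hfinI
          omega
        obtain ⟨M₁, M₂, Q₂, k1, k2, k3, k4⟩ :=
          ih (T.nomA.act s α) (T.nomS.act s A') htr' hne' hfresh' hcard'
        -- undo the swap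
        have hQfix : T.nomS.act s Q = Q :=
          fresh_swap T.nomS (hfresh a haα') hbQ
        refine ⟨T.nomS.act s M₁, T.nomS.act s M₂, T.nomS.act s Q₂, ?_, ?_, ?_, ?_⟩
        · have := tauStar_swap T τ hτ a b k1
          rwa [hQfix] at this
        · have := T.tr_eqv _ (isFinPerm_swap a b) _ _ _ k2
          rwa [act_swap_swap] at this
        · exact tauStar_swap T τ hτ a b k3
        · have := wb_swap T τ hτ a b k4
          rwa [act_swap_swap] at this

end Aux

/-- Interpolation lemma: if `P ⟹ Q ⟹ R` and `P ≈ R`, then `Q ≈ R`. -/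
theorem wbisim_interpolation {S Pr Ac : Type} (T : NTS S Pr Ac) (τ : Ac)
    (hτ : suppAct T.nomA.act τ = ∅) (P Q R : S)
    (h1 : TauStar T τ P Q) (h2 : TauStar T τ Q R) (h : T.WBisim τ P R) :
    T.WBisim τ Q R := by
  classical
  set WB := T.WBisim τ with hWBdef
  refine ⟨fun A B => (A = Q ∧ B = R) ∨ (A = R ∧ B = Q) ∨ WB A B, ⟨?_, ?_⟩,
    Or.inl ⟨rfl, rfl⟩⟩
  · rintro A B (⟨rfl, rfl⟩ | ⟨rfl, rfl⟩ | hw)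
    · exact Or.inr (Or.inl ⟨rfl, rfl⟩)
    · exact Or.inl ⟨rfl, rfl⟩
    · exact Or.inr (Or.inr (wb_symm T τ hw))
  · rintro A B (⟨rfl, rfl⟩ | ⟨rfl, rfl⟩ | hw)
    · -- pair (Q, R)
      obtain ⟨R₁, hRR₁, hQR₁⟩ := tau_answer T τ hτ h h1
      constructor
      · intro φ hφ
        obtain ⟨R₂, hR₁R₂, hsat, hb⟩ := ((wb_isWeakBisim T τ).2 _ _ hQR₁).1 φ hφ
        exact ⟨R₂, tauStar_trans T τ hRR₁ hR₁R₂, hsat, Or.inr (Or.inr hb)⟩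
      · intro α Q' hfresh htr
        by_cases hα : α = τ
        · rw [hα] at htr ⊢
          obtain ⟨R₂, hw2, hb⟩ := ((wb_isWeakBisim T τ).2 _ _ hQR₁).2 τ Q'
            (fun a ha _ => bn_tau T τ hτ a ha) htr
          refine ⟨R₂, tauStar_weakTr T τ
            (tauStar_trans T τ hRR₁ (weakTr_tauStar T τ hw2)), Or.inr (Or.inr hb)⟩
        · obtain ⟨M₁, M₂, R₂, k1, k2, k3, k4⟩ :=
            sim_answer T τ hτ hRR₁ hQR₁ _ α Q' htr hα hfresh le_rfl
          refine ⟨R₂, ?_, Or.inr (Or.inr k4)⟩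
          rw [NTS.weakTr, if_neg hα]
          exact ⟨M₁, M₂, k1, k2, k3⟩
    · -- pair (R, Q)
      constructor
      · intro φ hφ
        exact ⟨A, h2, hφ, Or.inr (Or.inr (wb_refl T τ A))⟩
      · intro α R' _ htr
        refine ⟨R', ?_, Or.inr (Or.inr (wb_refl T τ R'))⟩
        by_cases hα : α = τ
        · rw [hα] at htr ⊢
          exact tauStar_weakTr T τ
            (tauStar_trans T τ h2 (TauStar.step htr (TauStar.refl _)))
        · rw [NTS.weakTr, if_neg hα]
          exact ⟨A, R', h2, htr, TauStar.refl _⟩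
    · -- pair in WB
      constructor
      · intro φ hφ
        obtain ⟨B', hb1, hb2, hb3⟩ := ((wb_isWeakBisim T τ).2 _ _ hw).1 φ hφ
        exact ⟨B', hb1, hb2, Or.inr (Or.inr hb3)⟩
      · intro α A' hfresh htr
        obtain ⟨B', hb1, hb2⟩ := ((wb_isWeakBisim T τ).2 _ _ hw).2 α A' hfresh htr
        exact ⟨B', hb1, Or.inr (Or.inr hb2)⟩
end
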